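/- Let Γ be an open convex symmetric cone in ℝ² with vertex at the origin satisfying Γ₂ ⊆ Γ ⊆ Γ₁, where Γ₁ = {(λ₁,λ₂) : λ₁+λ₂ > 0} and Γ₂ = {(λ₁,λ₂) : λ₁ > 0 and λ₂ > 0}. Then Γ = Γ_p for some 1 ≤ p ≤ 2, where Γ_p = {(λ₁,λ₂) : λ₂ > (p-2)λ₁ and λ₁ > (p-2)λ₂}. Conversely, every Γ_p with 1 ≤ p ≤ 2 is such a cone. -/

import Mathlib

/-!
On the half-plane `λ₁ > 0` a cone is determined by its slice `{t | (1, t) ∈ Γ}`, and for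
a symmetric cone inside `Γ₁` symmetry accounts for the remaining points. For a cone as in the theorem the slice
is open and convex, contains `(0, ∞)` because `Γ₂ ⊆ Γ`, and lies in `(-1, ∞)` because
`Γ ⊆ Γ₁`; hence it is a ray `(c, ∞)` with `-1 ≤ c ≤ 0`, and then `Γ = Γ_{c+2}`.
-/

def Gamma1 : Set (ℝ × ℝ) := {l | l.1 + l.2 > 0}

def Gamma2 : Set (ℝ × ℝ) := {l | l.1 > 0 ∧ l.2 > 0}

def GammaP (p : ℝ) : Set (ℝ × ℝ) := {l | l.2 > (p - 2) * l.1 ∧ l.1 > (p - 2) * l.2}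

/-- An open convex symmetric cone in ℝ² with vertex at the origin, with Γ₂ ⊆ Γ ⊆ Γ₁. -/
def IsGoodCone (Γ : Set (ℝ × ℝ)) : Prop :=
  IsOpen Γ ∧ Convex ℝ Γ ∧ (∀ l ∈ Γ, (l.2, l.1) ∈ Γ) ∧
  (∀ l ∈ Γ, ∀ t : ℝ, 0 < t → t • l ∈ Γ) ∧ Gamma2 ⊆ Γ ∧ Γ ⊆ Gamma1

open Set

theorem IsPreconnected.eq_Ioi_csInf_of_isOpen {α : Type*} [ConditionallyCompleteLinearOrder α]
    [TopologicalSpace α] [OrderTopology α] [DenselyOrdered α] [NoMinOrder α] {s : Set α}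
    (hs : IsPreconnected s) (hopen : IsOpen s) (hb : BddBelow s) (ha : ¬BddAbove s) :
    s = Ioi (sInf s) := by
  refine subset_antisymm (fun x hx => (csInf_le hb hx).lt_of_ne ?_) (hs.Ioi_csInf_subset hb ha)
  rintro rfl
  obtain ⟨y, hy, hys⟩ := Filter.Eventually.exists_lt (hopen.mem_nhds hx)
  exact (csInf_le hb hys).not_gt hy

section GammaP

variable {p : ℝ}

theorem convex_setOf_mul_fst_lt_snd (a : ℝ) : Convex ℝ {l : ℝ × ℝ | a * l.1 < l.2} := by
  simpa only [sub_neg] using convex_halfSpace_lt (f := fun l : ℝ × ℝ => a * l.1 - l.2)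
    ⟨fun x y => by simp only [Prod.fst_add, Prod.snd_add]; ring,
     fun t x => by simp only [Prod.smul_fst, Prod.smul_snd, smul_eq_mul]; ring⟩ 0

theorem convex_setOf_mul_snd_lt_fst (a : ℝ) : Convex ℝ {l : ℝ × ℝ | a * l.2 < l.1} := by
  simpa only [sub_neg] using convex_halfSpace_lt (f := fun l : ℝ × ℝ => a * l.2 - l.1)
    ⟨fun x y => by simp only [Prod.fst_add, Prod.snd_add]; ring,
     fun t x => by simp only [Prod.smul_fst, Prod.smul_snd, smul_eq_mul]; ring⟩ 0

theorem gammaP_eq_inter (p : ℝ) :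
    GammaP p = {l | (p - 2) * l.1 < l.2} ∩ {l | (p - 2) * l.2 < l.1} := rfl

theorem isOpen_gammaP (p : ℝ) : IsOpen (GammaP p) :=
  (isOpen_lt (continuous_const.mul continuous_fst) continuous_snd).inter
    (isOpen_lt (continuous_const.mul continuous_snd) continuous_fst)

theorem convex_gammaP (p : ℝ) : Convex ℝ (GammaP p) :=
  (convex_setOf_mul_fst_lt_snd _).inter (convex_setOf_mul_snd_lt_fst _)

theorem swap_mem_gammaP {l : ℝ × ℝ} (hl : l ∈ GammaP p) : (l.2, l.1) ∈ GammaP p :=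
  ⟨hl.2, hl.1⟩

theorem smul_mem_gammaP {l : ℝ × ℝ} (hl : l ∈ GammaP p) {t : ℝ} (ht : 0 < t) :
    t • l ∈ GammaP p := by
  obtain ⟨h₁, h₂⟩ := hl
  constructor <;> simp only [Prod.smul_fst, Prod.smul_snd, smul_eq_mul] <;> nlinarith

theorem gamma2_subset_gammaP (hp : p ≤ 2) : Gamma2 ⊆ GammaP p := by
  rintro ⟨x, y⟩ ⟨hx, hy⟩
  constructor <;> dsimp only <;> nlinarith

theorem gammaP_subset_gamma1 (hp : p < 3) : GammaP p ⊆ Gamma1 := by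
  rintro ⟨x, y⟩ ⟨h₁, h₂⟩
  show 0 < x + y
  nlinarith

theorem isGoodCone_gammaP (hp : p ≤ 2) : IsGoodCone (GammaP p) :=
  ⟨isOpen_gammaP p, convex_gammaP p, fun _ => swap_mem_gammaP,
    fun _ hl _ ht => smul_mem_gammaP hl ht, gamma2_subset_gammaP hp,
    gammaP_subset_gamma1 (by linarith)⟩

end GammaP

def slice (Γ : Set (ℝ × ℝ)) : Set ℝ := {t | ((1 : ℝ), t) ∈ Γ}

section Slice

variable {Γ : Set (ℝ × ℝ)}

theorem mk_mem_iff_div_mem_slice (hcone : ∀ l ∈ Γ, ∀ t : ℝ, 0 < t → t • l ∈ Γ)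
    {x : ℝ} (hx : 0 < x) (y : ℝ) : (x, y) ∈ Γ ↔ y / x ∈ slice Γ := by
  constructor
  · intro h
    simpa [slice, Prod.smul_mk, hx.ne', div_eq_inv_mul] using hcone _ h x⁻¹ (inv_pos.2 hx)
  · intro h
    simpa [slice, Prod.smul_mk, hx.ne', mul_div_cancel₀] using hcone _ h x hx

theorem IsGoodCone.slice_eq_Ioi (h : IsGoodCone Γ) :
    ∃ c : ℝ, -1 ≤ c ∧ c ≤ 0 ∧ slice Γ = Ioi c := by
  obtain ⟨hopen, hconv, -, -, h2, h1⟩ := h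
  have hopen' : IsOpen (slice Γ) := hopen.preimage (continuous_const.prodMk continuous_id)
  have hconv' : Convex ℝ (slice Γ) := fun x hx y hy a b ha hb hab => by
    simpa [slice, Prod.smul_mk, hab] using hconv hx hy ha hb hab
  have hpos : Ioi 0 ⊆ slice Γ := fun t ht => h2 ⟨one_pos, ht⟩
  have hgt : slice Γ ⊆ Ioi (-1) := fun t ht => by
    have : 0 < 1 + t := h1 ht
    show -1 < t
    linarith
  have hS := hconv'.isPreconnected.eq_Ioi_csInf_of_isOpen hopen' ⟨-1, fun t ht => (hgt ht).le⟩
    fun hb => not_bddAbove_Ioi 0 (hb.mono hpos)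
  refine ⟨sInf (slice Γ), ?_, ?_, hS⟩
  · exact Ioi_subset_Ioi_iff.1 (hS ▸ hgt)
  · exact Ioi_subset_Ioi_iff.1 (hS ▸ hpos)

theorem eq_gammaP_of_slice_eq_Ioi (hsymm : ∀ l ∈ Γ, (l.2, l.1) ∈ Γ)
    (hcone : ∀ l ∈ Γ, ∀ t : ℝ, 0 < t → t • l ∈ Γ) (h1 : Γ ⊆ Gamma1) {c : ℝ} (hc : -1 ≤ c)
    (hc' : c < 1) (hS : slice Γ = Ioi c) : Γ = GammaP (c + 2) := by
  have mem_iff {x : ℝ} (hx : 0 < x) (y : ℝ) : (x, y) ∈ Γ ↔ c * x < y := by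
    rw [mk_mem_iff_div_mem_slice hcone hx, hS, mem_Ioi, lt_div_iff₀ hx]
  have lower {x y : ℝ} (h : (x, y) ∈ Γ) : c * x < y := by
    rcases lt_or_ge 0 x with hx | hx
    · exact (mem_iff hx y).1 h
    · have : 0 < x + y := h1 h
      nlinarith
  ext ⟨x, y⟩
  refine ⟨fun h => ?_, fun h => ?_⟩
  · rw [gammaP_eq_inter, add_sub_cancel_right]
    exact ⟨lower h, lower (hsymm _ h)⟩
  · have hsum : 0 < x + y := gammaP_subset_gamma1 (by linarith) h
    rw [gammaP_eq_inter, add_sub_cancel_right] at h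
    rcases lt_or_ge 0 x with hx | hx
    · exact (mem_iff hx y).2 h.1
    · exact hsymm _ ((mem_iff (by linarith) x).2 h.2)

end Slice

theorem stmt0 (Γ : Set (ℝ × ℝ)) :
    IsGoodCone Γ ↔ ∃ p : ℝ, 1 ≤ p ∧ p ≤ 2 ∧ Γ = GammaP p := by
  constructor
  · intro h
    obtain ⟨c, hc, hc', hS⟩ := h.slice_eq_Ioi
    obtain ⟨-, -, hsymm, hcone, -, h1⟩ := h
    exact ⟨c + 2, by linarith, by linarith,
      eq_gammaP_of_slice_eq_Ioi hsymm hcone h1 hc (by linarith) hS⟩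
  · rintro ⟨p, -, hp, rfl⟩
    exact isGoodCone_gammaP hp
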